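/- For n ≥ 3, let L be the language of the DFA 𝒰_{{0},n}(a,b,c), which is 𝒰ₙ(a,b,c) with final state set changed to {0}. Then L* = L, hence (L*)ᴿ = Lᴿ, and the state complexity of (L*)ᴿ is exactly 2ⁿ. -/

import Mathlib

namespace SCPaper

/-- Reversal of a language. -/
def rev {α : Type} (L : Language α) : Language α := {w | w.reverse ∈ L}

/-- Union of two languages. -/
def lunion {α : Type} (K L : Language α) : Language α := {w | w ∈ K ∨ w ∈ L}

/-- Intersection of two languages. -/
def linter {α : Type} (K L : Language α) : Language α := {w | w ∈ K ∧ w ∈ L}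

/-- Difference of two languages. -/
def ldiff {α : Type} (K L : Language α) : Language α := {w | w ∈ K ∧ w ∉ L}

/-- Symmetric difference of two languages. -/
def lsymm {α : Type} (K L : Language α) : Language α := lunion (ldiff K L) (ldiff L K)

/-- Sizes (numbers of states) of complete DFAs recognizing `L`. -/
def complexitySet {α : Type} (L : Language α) : Set ℕ :=
  {n | ∃ M : DFA α (Fin n), M.accepts = L}

/-- A language is regular if it is recognized by some finite DFA. -/
def Regular {α : Type} (L : Language α) : Prop := (complexitySet L).Nonempty

/-- State complexity: the number of states of a minimal DFA for `L`. -/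
noncomputable def sc {α : Type} (L : Language α) : ℕ := sInf (complexitySet L)

/-- The cyclic permutation (0,1,…,n−1). -/
def cyc (n : ℕ) (i : Fin n) : Fin n :=
  ⟨(i.val + 1) % n, Nat.mod_lt _ (Nat.lt_of_le_of_lt (Nat.zero_le _) i.isLt)⟩

/-- The transposition (0,1). -/
def tp01 (n : ℕ) (i : Fin n) : Fin n :=
  if i.val = 0 then ⟨1 % n, Nat.mod_lt _ (Nat.lt_of_le_of_lt (Nat.zero_le _) i.isLt)⟩
  else if i.val = 1 then ⟨0, Nat.lt_of_le_of_lt (Nat.zero_le _) i.isLt⟩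
  else i

/-- The singular map sending n−1 to 0 and fixing everything else. -/
def sing (n : ℕ) (i : Fin n) : Fin n :=
  if i.val = n - 1 then ⟨0, Nat.lt_of_le_of_lt (Nat.zero_le _) i.isLt⟩ else i

/-- The transposition (n−2, n−1). -/
def tpTop (n : ℕ) (i : Fin n) : Fin n :=
  if i.val = n - 1 then ⟨n - 2, by have := i.isLt; omega⟩
  else if i.val = n - 2 then ⟨n - 1, by have := i.isLt; omega⟩
  else i

/-- The singular map sending n−1 to n−2 and fixing everything else. -/
def singTop (n : ℕ) (i : Fin n) : Fin n :=
  if i.val = n - 1 then ⟨n - 2, by have := i.isLt; omega⟩ else i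

/-- 𝒰ₙ(a,b,∅): binary alphabet, a = cycle (0,…,n−1), b = transposition (0,1),
initial state 0, final state n−1. -/
def U2dfa (n : ℕ) (h : 0 < n) : DFA (Fin 2) (Fin n) where
  step := fun i x => if x = 0 then cyc n i else tp01 n i
  start := ⟨0, h⟩
  accept := {i | i.val = n - 1}

def U2 (n : ℕ) (h : 0 < n) : Language (Fin 2) := (U2dfa n h).accepts

/-- 𝒰ₙ(a,b,c): a = cycle, b = transposition (0,1), c = (n−1 ↦ 0). -/
def Udfa (n : ℕ) (h : 0 < n) : DFA (Fin 3) (Fin n) where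
  step := fun i x => if x = 0 then cyc n i else if x = 1 then tp01 n i else sing n i
  start := ⟨0, h⟩
  accept := {i | i.val = n - 1}

def U (n : ℕ) (h : 0 < n) : Language (Fin 3) := (Udfa n h).accepts

/-- 𝒰ₙ(a,b,c) with final state set {0}. -/
def U0dfa (n : ℕ) (h : 0 < n) : DFA (Fin 3) (Fin n) where
  step := fun i x => if x = 0 then cyc n i else if x = 1 then tp01 n i else sing n i
  start := ⟨0, h⟩
  accept := {i | i.val = 0}

def U0 (n : ℕ) (h : 0 < n) : Language (Fin 3) := (U0dfa n h).accepts

/-- 𝒰ₙ(a,b,c,d): a = cycle, b = transposition (0,1), c = (n−1 ↦ 0), d = identity. -/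
def U4dfa (n : ℕ) (h : 0 < n) : DFA (Fin 4) (Fin n) where
  step := fun i x =>
    if x = 0 then cyc n i else if x = 1 then tp01 n i else if x = 2 then sing n i else i
  start := ⟨0, h⟩
  accept := {i | i.val = n - 1}

def U4 (n : ℕ) (h : 0 < n) : Language (Fin 4) := (U4dfa n h).accepts

/-- 𝒰ₙ(d,c,b,a): d = cycle, c = transposition (0,1), b = (n−1 ↦ 0), a = identity. -/
def U4dcbaDfa (n : ℕ) (h : 0 < n) : DFA (Fin 4) (Fin n) where
  step := fun i x =>
    if x = 3 then cyc n i else if x = 2 then tp01 n i else if x = 1 then sing n i else i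
  start := ⟨0, h⟩
  accept := {i | i.val = n - 1}

def U4dcba (n : ℕ) (h : 0 < n) : Language (Fin 4) := (U4dcbaDfa n h).accepts

/-- 𝒱ₙ(a,b,c,d): a = cycle, b = transposition (n−2,n−1), c = (n−1 ↦ n−2), d = identity. -/
def Vdfa (n : ℕ) (h : 0 < n) : DFA (Fin 4) (Fin n) where
  step := fun i x =>
    if x = 0 then cyc n i else if x = 1 then tpTop n i else if x = 2 then singTop n i else i
  start := ⟨0, h⟩
  accept := {i | i.val = n - 1}

def V (n : ℕ) (h : 0 < n) : Language (Fin 4) := (Vdfa n h).accepts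

/-- 𝒱ₙ(d,c,b,a): d = cycle, c = transposition (n−2,n−1), b = (n−1 ↦ n−2), a = identity. -/
def VdcbaDfa (n : ℕ) (h : 0 < n) : DFA (Fin 4) (Fin n) where
  step := fun i x =>
    if x = 3 then cyc n i else if x = 2 then tpTop n i else if x = 1 then singTop n i else i
  start := ⟨0, h⟩
  accept := {i | i.val = n - 1}

def Vdcba (n : ℕ) (h : 0 < n) : Language (Fin 4) := (VdcbaDfa n h).accepts

/-- Direct product of two DFAs with a chosen set of final states. -/
def prodDFA {α σ₁ σ₂ : Type} (M : DFA α σ₁) (N : DFA α σ₂) (acc : Set (σ₁ × σ₂)) :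
    DFA α (σ₁ × σ₂) where
  step := fun p x => (M.step p.1 x, N.step p.2 x)
  start := (M.start, N.start)
  accept := acc


/-- Chinese-remainder style pairing k ↦ (k mod m, k mod n). -/
def toPair (m n : ℕ) (hm : 0 < m) (hn : 0 < n) (k : Fin (m * n)) : Fin m × Fin n :=
  (⟨k.val % m, Nat.mod_lt _ hm⟩, ⟨k.val % n, Nat.mod_lt _ hn⟩)

/-- Componentwise successor on the product of two cyclic automata. -/
def prodSucc (m n : ℕ) (p : Fin m × Fin n) : Fin m × Fin n := (cyc m p.1, cyc n p.2)

/-- One-letter subset transition of the reversed NFA of 𝒰ₙ(a,b,c). -/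
def rstep (n : ℕ) (h : 0 < n) (S : Set (Fin n)) (x : Fin 3) : Set (Fin n) :=
  {q | (Udfa n h).step q x ∈ S}

/-- Action of a word on subsets in the reversed NFA of 𝒰ₙ(a,b,c). -/
def rword (n : ℕ) (h : 0 < n) (S : Set (Fin n)) (w : List (Fin 3)) : Set (Fin n) :=
  w.foldl (rstep n h) S

end SCPaper

open SCPaper

open SCPaper

/-!
The only final state of `𝒰_{{0},n}` is its initial state, so `L` contains `ε` and is closed
under concatenation, whence `L* = L`.

For the reversal, the subset automaton of the reversed automaton reaches exactly the sets
`t⁻¹' {0}` with `t` in the transition monoid of `𝒰ₙ`. Since `a` and `b` generate the symmetric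
group, this family is closed under permutations, so membership depends only on cardinality. It
contains `∅` (from the word `ca`) and `{0}`, and the preimage of `{0, …, k-1}` under `c` is
`{0, …, k-1, n-1}`; hence all `2ⁿ` subsets are reached. Because every state of `𝒰ₙ` is reachable, distinct subsets
have distinct left quotients in `Lᴿ`, so every DFA for `Lᴿ` has at least `2ⁿ` states.
-/

namespace DFA

variable {α σ : Type*} {M : DFA α σ}

def transitionMonoid (M : DFA α σ) : Submonoid (Function.End σ) where
  carrier := Set.range fun w q => M.evalFrom q w
  mul_mem' := by
    rintro _ _ ⟨u, rfl⟩ ⟨v, rfl⟩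
    exact ⟨v ++ u, funext fun q => M.evalFrom_of_append q v u⟩
  one_mem' := ⟨[], rfl⟩

theorem step_mem_transitionMonoid (M : DFA α σ) (a : α) :
    (M.step · a) ∈ M.transitionMonoid :=
  ⟨[a], rfl⟩

theorem comp_mem_transitionMonoid {f g : σ → σ} (hf : f ∈ M.transitionMonoid)
    (hg : g ∈ M.transitionMonoid) : f ∘ g ∈ M.transitionMonoid :=
  M.transitionMonoid.mul_mem hf hg

def IsAcceptPreimage (M : DFA α σ) (S : Set σ) : Prop :=
  ∃ t : σ → σ, t ∈ M.transitionMonoid ∧ t ⁻¹' M.accept = S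

theorem isAcceptPreimage_accept (M : DFA α σ) : M.IsAcceptPreimage M.accept :=
  ⟨id, M.transitionMonoid.one_mem, rfl⟩

theorem IsAcceptPreimage.preimage {S : Set σ} (hS : M.IsAcceptPreimage S) {g : σ → σ}
    (hg : g ∈ M.transitionMonoid) : M.IsAcceptPreimage (g ⁻¹' S) := by
  obtain ⟨t, ht, rfl⟩ := hS
  exact ⟨t ∘ g, comp_mem_transitionMonoid ht hg, Set.preimage_comp⟩

theorem IsAcceptPreimage.of_card_eq [DecidableEq σ]
    (hperm : ∀ π : Equiv.Perm σ, ⇑π ∈ M.transitionMonoid) {s s' : Finset σ}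
    (hcard : s.card = s'.card) (hs : M.IsAcceptPreimage s) : M.IsAcceptPreimage s' := by
  obtain ⟨π, rfl⟩ := Equiv.Perm.exists_map_finset_eq s s' hcard
  rw [Finset.coe_map, Equiv.coe_toEmbedding, Equiv.image_eq_preimage_symm]
  exact hs.preimage (hperm π.symm)

theorem kstar_accepts_of_accept_eq_start (h : M.accept = {M.start}) :
    KStar.kstar M.accepts = M.accepts := by
  have mem_iff (w : List α) : w ∈ M.accepts ↔ M.eval w = M.start := by
    rw [mem_accepts, h, Set.mem_singleton_iff]
  have one_le : 1 ≤ M.accepts := by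
    rintro _ rfl
    exact (mem_iff []).2 rfl
  refine (kstar_le_of_mul_le_left one_le ?_).antisymm le_kstar
  intro w hw
  obtain ⟨u, hu, v, hv, rfl⟩ := Language.mem_mul.1 hw
  rw [mem_iff] at hu hv
  refine (mem_iff _).2 ?_
  rw [eval, evalFrom_of_append, ← eval, hu, ← eval, hv]

end DFA

namespace SCPaper

variable {α σ : Type}

theorem card_mem_complexitySet [Fintype σ] (M : DFA α σ) :
    Fintype.card σ ∈ complexitySet M.accepts :=
  ⟨DFA.reindex (Fintype.equivFin σ) M, DFA.accepts_reindex _ _⟩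

theorem two_pow_card_mem_complexitySet_rev [Fintype σ] (M : DFA α σ) :
    2 ^ Fintype.card σ ∈ complexitySet (rev M.accepts) := by
  classical
  have hrev : M.toNFA.reverse.accepts = rev M.accepts :=
    Language.ext fun w => by rw [NFA.mem_accepts_reverse, DFA.toNFA_correct]; rfl
  have h := card_mem_complexitySet M.toNFA.reverse.toDFA
  rwa [Fintype.card_set, NFA.toDFA_correct, hrev] at h

theorem mem_leftQuotient_rev_accepts (M : DFA α σ) (w z : List α) :
    z ∈ (rev M.accepts).leftQuotient w ↔ M.evalFrom (M.eval z.reverse) w.reverse ∈ M.accept := by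
  change (w ++ z).reverse ∈ M.accepts ↔ _
  rw [List.reverse_append, DFA.mem_accepts, DFA.eval, DFA.evalFrom_of_append]

theorem two_pow_card_le_of_mem_complexitySet_rev [Fintype σ] {M : DFA α σ}
    (hreach : Function.Surjective M.eval) (hsub : ∀ S : Finset σ, M.IsAcceptPreimage S) {m : ℕ}
    (hm : m ∈ complexitySet (rev M.accepts)) : 2 ^ Fintype.card σ ≤ m := by
  classical
  obtain ⟨N, hN⟩ := hm
  choose t ht hts using hsub
  choose w hw using fun S => ht S
  have hinj : Function.Injective fun S => N.eval (w S).reverse := by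
    intro S T hST
    have hquot : (rev M.accepts).leftQuotient (w S).reverse
        = (rev M.accepts).leftQuotient (w T).reverse := by
      rw [← hN, Language.leftQuotient_accepts_apply, Language.leftQuotient_accepts_apply]
      exact congrArg N.acceptsFrom hST
    ext q
    obtain ⟨u, rfl⟩ := hreach q
    have hq : u.reverse ∈ (rev M.accepts).leftQuotient (w S).reverse
        ↔ u.reverse ∈ (rev M.accepts).leftQuotient (w T).reverse := by rw [hquot]
    simp only [mem_leftQuotient_rev_accepts, List.reverse_reverse] at hq
    rw [← Finset.mem_coe, ← Finset.mem_coe, ← hts S, ← hts T, ← hw S, ← hw T]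
    exact hq
  simpa [Fintype.card_finset] using Fintype.card_le_of_injective _ hinj

theorem sc_rev_accepts [Fintype σ] {M : DFA α σ} (hreach : Function.Surjective M.eval)
    (hsub : ∀ S : Finset σ, M.IsAcceptPreimage S) : sc (rev M.accepts) = 2 ^ Fintype.card σ :=
  (Nat.sInf_le (two_pow_card_mem_complexitySet_rev M)).antisymm
    (le_csInf ⟨_, two_pow_card_mem_complexitySet_rev M⟩
      fun _ hm => two_pow_card_le_of_mem_complexitySet_rev hreach hsub hm)

theorem cyc_eq_finRotate (n : ℕ) : cyc n = ⇑(finRotate n) := by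
  funext i
  obtain ⟨m, rfl⟩ : ∃ m, n = m + 1 := ⟨n - 1, by have := i.isLt; omega⟩
  rw [finRotate_apply]
  ext
  simp [cyc, Fin.val_add]

theorem tp01_eq_swap {n : ℕ} (hn : 2 ≤ n) :
    tp01 n = ⇑(Equiv.swap (⟨0, by omega⟩ : Fin n) ⟨1, by omega⟩) := by
  funext i
  simp only [tp01, Equiv.swap_apply_def, Fin.ext_iff, Nat.mod_eq_of_lt (show 1 < n by omega)]

theorem cyc_preimage_zero {n : ℕ} (hn : 0 < n) :
    cyc n ⁻¹' {i | i.val = 0} = {⟨n - 1, by omega⟩} := by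
  ext i
  have := i.isLt
  rw [Set.mem_singleton_iff, Fin.ext_iff]
  change (i.val + 1) % n = 0 ↔ i.val = n - 1
  rcases Nat.lt_or_ge (i.val + 1) n with hi | hi
  · rw [Nat.mod_eq_of_lt hi]; omega
  · rw [show i.val + 1 = n by omega, Nat.mod_self]; omega

theorem val_sing (n : ℕ) (i : Fin n) : (sing n i).val = if i.val = n - 1 then 0 else i.val := by
  unfold sing
  split_ifs <;> rfl

theorem sing_preimage_last {n : ℕ} (hn : 2 ≤ n) : sing n ⁻¹' {⟨n - 1, by omega⟩} = ∅ := by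
  ext i
  simp only [Set.mem_preimage, Set.mem_singleton_iff, Fin.ext_iff, Set.mem_empty_iff_false,
    iff_false, val_sing]
  split_ifs <;> omega

theorem sing_preimage_Iio {n k : ℕ} (hk : 0 < k) (hkn : k < n) :
    sing n ⁻¹' (Finset.Iio (⟨k, hkn⟩ : Fin n) : Set (Fin n))
      = ↑(insert ⟨n - 1, by omega⟩ (Finset.Iio (⟨k, hkn⟩ : Fin n))) := by
  ext i
  simp only [Set.mem_preimage, Finset.coe_Iio, Finset.coe_insert, Set.mem_insert_iff,
    Set.mem_Iio, Fin.lt_def, Fin.ext_iff, val_sing]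
  split_ifs <;> omega

variable {n : ℕ} (h : 0 < n)

theorem U0dfa_accept_eq_start : (U0dfa n h).accept = {(U0dfa n h).start} := by
  ext i
  simp only [U0dfa, Set.mem_ofPred_eq, Set.mem_singleton_iff, Fin.ext_iff]

theorem U0dfa_perm_mem_transitionMonoid (hn : 2 ≤ n) (π : Equiv.Perm (Fin n)) :
    ⇑π ∈ (U0dfa n h).transitionMonoid := by
  let perms := (U0dfa n h).transitionMonoid.comap (MulAction.toEndHom (M := Equiv.Perm (Fin n)))
  have mem_perms (π : Equiv.Perm (Fin n)) : π ∈ perms ↔ ⇑π ∈ (U0dfa n h).transitionMonoid :=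
    Iff.rfl
  have hrot : finRotate n ⟨0, h⟩ = ⟨1, by omega⟩ := by
    rw [← cyc_eq_finRotate]
    ext
    exact Nat.mod_eq_of_lt (show 0 + 1 < n by omega)
  have hgen : Submonoid.closure {finRotate n, Equiv.swap ⟨0, h⟩ (finRotate n ⟨0, h⟩)} ≤ perms := by
    rw [Submonoid.closure_le, Set.insert_subset_iff, Set.singleton_subset_iff, hrot,
      SetLike.mem_coe, SetLike.mem_coe, mem_perms, mem_perms, ← cyc_eq_finRotate, ← tp01_eq_swap hn]
    exact ⟨(U0dfa n h).step_mem_transitionMonoid 0, (U0dfa n h).step_mem_transitionMonoid 1⟩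
  rw [← Subgroup.closure_toSubmonoid_of_finite, Equiv.Perm.closure_cycle_adjacent_swap
    (isCycle_finRotate_of_le hn) (support_finRotate_of_le hn)] at hgen
  exact hgen (Subgroup.mem_top π)

theorem U0dfa_eval_surjective (hn : 2 ≤ n) : Function.Surjective (U0dfa n h).eval := by
  intro q
  obtain ⟨w, hw⟩ := U0dfa_perm_mem_transitionMonoid h hn (Equiv.swap ⟨0, h⟩ q)
  exact ⟨w, (congrFun hw _).trans (Equiv.swap_apply_left _ _)⟩

theorem U0dfa_isAcceptPreimage (hn : 2 ≤ n) (s : Finset (Fin n)) :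
    (U0dfa n h).IsAcceptPreimage s := by
  have hperm := U0dfa_perm_mem_transitionMonoid h hn
  induction hs : s.card generalizing s with
  | zero =>
    rw [Finset.card_eq_zero.1 hs, Finset.coe_empty, ← sing_preimage_last hn,
      ← cyc_preimage_zero h]
    exact ((U0dfa n h).isAcceptPreimage_accept.preimage ((U0dfa n h).step_mem_transitionMonoid 0)
      ).preimage ((U0dfa n h).step_mem_transitionMonoid 2)
  | succ k ih =>
    have hk : k < n := by simpa [hs] using s.card_le_univ
    rcases Nat.eq_zero_or_pos k with rfl | hk0
    · have hstart := (U0dfa n h).isAcceptPreimage_accept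
      rw [U0dfa_accept_eq_start, ← Finset.coe_singleton] at hstart
      exact hstart.of_card_eq hperm (by simp [hs])
    · have hprev : (U0dfa n h).IsAcceptPreimage (sing n ⁻¹' ↑(Finset.Iio (⟨k, hk⟩ : Fin n))) :=
        (ih (Finset.Iio ⟨k, hk⟩) (Fin.card_Iio _)).preimage
          ((U0dfa n h).step_mem_transitionMonoid 2)
      rw [sing_preimage_Iio hk0 hk] at hprev
      refine hprev.of_card_eq hperm ?_
      rw [Finset.card_insert_of_notMem (by simp [Fin.lt_def]; omega), Fin.card_Iio, hs]

end SCPaper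

theorem star_reversed_tight (n : ℕ) (hn : 3 ≤ n) :
    KStar.kstar (U0 n (by omega)) = U0 n (by omega) ∧
    rev (KStar.kstar (U0 n (by omega))) = rev (U0 n (by omega)) ∧
    sc (rev (KStar.kstar (U0 n (by omega)))) = 2 ^ n := by
  have h : 0 < n := by omega
  have hstar : KStar.kstar (U0 n h) = U0 n h :=
    DFA.kstar_accepts_of_accept_eq_start (U0dfa_accept_eq_start h)
  refine ⟨hstar, congrArg rev hstar, ?_⟩
  rw [hstar, U0, sc_rev_accepts (U0dfa_eval_surjective h (by omega))
    (U0dfa_isAcceptPreimage h (by omega)), Fintype.card_fin]
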